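/- arXiv:1205.3429 — 2 statements merged into one kernel-verified Lean document; each statement's English description precedes it below -/
import Mathlib

section
/- Let k be a field with char(k) ≠ 2,3 and a,b,c,d,t,u,v,w ∈ k with u ≠ 0, u ≠ 1, cu ≠ 1, cu+bv ≠ 1, w² = u(u-1)v(v-1)(au+bv-1)(cu+dv-1) and t = uv/(cu+bv-1). Define x = t(bt-dt-1)(bt+ct-t-1)(abt-bct-a+1)/(u-1) and y = t(bt-dt-1)(bt+ct-t-1)(abt-bct-a+1)(u-bt)²·w/(u(cu-1)(u-1)²). Then y² = (x - t(bt+ct-t-1)(abt-bct-a+1))·(x - at(bt-dt-1)(bt+ct-t-1))·(x - t(1-ct)(bt-dt-1)(abt-bct-a+1)). -/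
/-!
On the fibre, `t (cu + bv - 1) = uv` says `v (u - bt) = t (cu - 1)`, so each of the six branch
factors becomes polynomial in `t, u` after multiplication by `u - bt`, and `(u - bt)⁴ w²` is
`u² (cu - 1)² (u - 1)` times `t (bt - dt - u) (bt + ctu - t - u) (abt - bct - au + 1)`. Writing
`x = t f₁ f₂ f₃ / (u - 1)`, each root `eᵢ` of the cubic is chosen so that `x - eᵢ` is `x` times
one of these three factors over `fᵢ`, and both sides become the same rational function.
-/

section FieldIdentities

variable {k : Type*} [Field k]

theorem sq_eq_of_eq_mul_sq_mul_div {T s w W D y : k} (hy : y = T * s ^ 2 * w / D)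
    (hw : w ^ 2 = W) : y ^ 2 = T ^ 2 * (s ^ 4 * W) / D ^ 2 := by
  rw [hy, ← hw]
  ring

theorem mul_div_mul_sq_eq {A Q r n m : k} (hr : r ≠ 0) (hn : n ≠ 0) (hm : m ≠ 0) :
    A * (r ^ 2 * n ^ 2 * m * Q) / (r * n * m ^ 2) ^ 2 = A * Q / m ^ 3 := by
  field_simp

theorem cubic_eq_of_eq_div {a e t f₁ f₂ f₃ m x : k} (hm : m ≠ 0)
    (hx : x = t * f₁ * f₂ * f₃ / m) :
    (x - t * f₂ * f₃) * (x - a * t * f₁ * f₂) * (x - t * e * f₁ * f₃)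
      = (t * f₁ * f₂ * f₃) ^ 2 * (t * (f₁ - m) * (f₂ - e * m) * (f₃ - a * m)) / m ^ 3 := by
  rw [hx]
  field_simp

end FieldIdentities

namespace Class27

variable {k : Type*} [Field k] (a b c d t u v : k)

theorem v_mul_sub_eq_of_param (ht : t * (c * u + b * v - 1) = u * v) :
    v * (u - b * t) = t * (c * u - 1) := by
  linear_combination -ht

theorem branch_locus_mul_pow_four (ht : t * (c * u + b * v - 1) = u * v) :
    (u - b * t) ^ 4 * (u * (u - 1) * v * (v - 1) * (a * u + b * v - 1) * (c * u + d * v - 1))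
      = u ^ 2 * (c * u - 1) ^ 2 * (u - 1) * (t * (b * t - d * t - u)
        * (b * t + c * t * u - t - u) * (a * b * t - b * c * t - a * u + 1)) := by
  have hv := v_mul_sub_eq_of_param b c t u v ht
  calc _ = u * (u - 1) * (v * (u - b * t)) * ((v - 1) * (u - b * t))
          * ((a * u + b * v - 1) * (u - b * t)) * ((c * u + d * v - 1) * (u - b * t)) := by ring
    _ = u * (u - 1) * (t * (c * u - 1)) * (b * t + c * t * u - t - u)
          * (-u * (a * b * t - b * c * t - a * u + 1)) * (-(c * u - 1) * (b * t - d * t - u)) := by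
      rw [hv, show (v - 1) * (u - b * t) = b * t + c * t * u - t - u by linear_combination hv,
        show (a * u + b * v - 1) * (u - b * t) = -u * (a * b * t - b * c * t - a * u + 1) by
          linear_combination b * hv,
        show (c * u + d * v - 1) * (u - b * t) = -(c * u - 1) * (b * t - d * t - u) by
          linear_combination d * hv]
    _ = _ := by ring

end Class27

open Class27 in
theorem class27_weierstrass_general {k : Type*} [Field k]
    (a b c d t u v w x y : k)
    (hu0 : u ≠ 0) (hu1 : u ≠ 1) (hcu : c * u ≠ 1) (hcb : c * u + b * v ≠ 1)
    (hw : w ^ 2 = u * (u - 1) * v * (v - 1) * (a * u + b * v - 1) * (c * u + d * v - 1))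
    (ht : t = u * v / (c * u + b * v - 1))
    (hx : x = t * (b * t - d * t - 1) * (b * t + c * t - t - 1) * (a * b * t - b * c * t - a + 1)
      / (u - 1))
    (hy : y = t * (b * t - d * t - 1) * (b * t + c * t - t - 1) * (a * b * t - b * c * t - a + 1)
      * (u - b * t) ^ 2 * w / (u * (c * u - 1) * (u - 1) ^ 2)) :
    y ^ 2 = (x - t * (b * t + c * t - t - 1) * (a * b * t - b * c * t - a + 1))
      * (x - a * t * (b * t - d * t - 1) * (b * t + c * t - t - 1))
      * (x - t * (1 - c * t) * (b * t - d * t - 1) * (a * b * t - b * c * t - a + 1)) := by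
  have hm : u - 1 ≠ 0 := sub_ne_zero.mpr hu1
  have hparam : t * (c * u + b * v - 1) = u * v := by
    rw [ht, div_mul_cancel₀ _ (sub_ne_zero.mpr hcb)]
  rw [cubic_eq_of_eq_div hm hx, sq_eq_of_eq_mul_sq_mul_div hy hw,
    branch_locus_mul_pow_four a b c d t u v hparam, mul_div_mul_sq_eq hu0 (sub_ne_zero.mpr hcu) hm]
  congr 2
  ring

/-- Classical-method verification for the class 2.7 Jacobian fibration:
the change of variables transforms the double-cover model into the Weierstrass form. -/
theorem class27_weierstrass {k : Type*} [Field k]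
    (hchar2 : ringChar k ≠ 2) (hchar3 : ringChar k ≠ 3)
    (a b c d t u v w x y : k)
    (hu0 : u ≠ 0) (hu1 : u ≠ 1) (hcu : c * u ≠ 1) (hcb : c * u + b * v ≠ 1)
    (hw : w ^ 2 = u * (u - 1) * v * (v - 1) * (a * u + b * v - 1) * (c * u + d * v - 1))
    (ht : t = u * v / (c * u + b * v - 1))
    (hx : x = t * (b * t - d * t - 1) * (b * t + c * t - t - 1) * (a * b * t - b * c * t - a + 1)
      / (u - 1))
    (hy : y = t * (b * t - d * t - 1) * (b * t + c * t - t - 1) * (a * b * t - b * c * t - a + 1)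
      * (u - b * t) ^ 2 * w / (u * (c * u - 1) * (u - 1) ^ 2)) :
    y ^ 2 = (x - t * (b * t + c * t - t - 1) * (a * b * t - b * c * t - a + 1))
      * (x - a * t * (b * t - d * t - 1) * (b * t + c * t - t - 1))
      * (x - t * (1 - c * t) * (b * t - d * t - 1) * (a * b * t - b * c * t - a + 1)) :=
  class27_weierstrass_general a b c d t u v w x y hu0 hu1 hcu hcb hw ht hx hy
end

section
/- Let k be a field with char(k) ≠ 2,3 and a,b,c,d,t,u,v,w ∈ k satisfying w² = u(u-1)v(v(-1))(au+bv-1)(cu+dv-1), v ≠ 0, u ≠ 1, v ≠ 1, and t = w/(v(u-1)(v-1)). Then (u,v) satisfies the plane cubic equation t²v - u + (d+b-t²)uv + (t²-bd)uv² - (bc+ad)u²v - t²v² - acu³ + (a+c)u² = 0. -/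
/-! The t²-terms of the cubic factor as t² · v(u-1)(v-1), and the remaining terms as
-u(au+bv-1)(cu+dv-1). Since t · v(u-1)(v-1) = w, multiplying t² by v(u-1)(v-1) gives
w² / (v(u-1)(v-1)) = u(au+bv-1)(cu+dv-1), so the cubic vanishes. -/

theorem class13_cubic_eq {R : Type*} [CommRing R] (a b c d t u v : R) :
    t ^ 2 * v - u + (d + b - t ^ 2) * u * v + (t ^ 2 - b * d) * u * v ^ 2
      - (b * c + a * d) * u ^ 2 * v - t ^ 2 * v ^ 2 - a * c * u ^ 3
      + (a + c) * u ^ 2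
      = t ^ 2 * (v * (u - 1) * (v - 1)) - u * (a * u + b * v - 1) * (c * u + d * v - 1) := by
  ring

theorem sq_mul_eq_of_eq_div {K : Type*} [Field K] {t w D x : K} (hD : D ≠ 0)
    (ht : t = w / D) (hw : w ^ 2 = D * x) : t ^ 2 * D = x := by
  rw [ht, div_pow, hw]
  field_simp

theorem class13_plane_cubic_general {k : Type*} [Field k]
    (a b c d t u v w : k)
    (hw : w ^ 2 = u * (u - 1) * v * (v - 1) * (a * u + b * v - 1) * (c * u + d * v - 1))
    (hv0 : v ≠ 0) (hu1 : u ≠ 1) (hv1 : v ≠ 1)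
    (ht : t = w / (v * (u - 1) * (v - 1))) :
    t ^ 2 * v - u + (d + b - t ^ 2) * u * v + (t ^ 2 - b * d) * u * v ^ 2
      - (b * c + a * d) * u ^ 2 * v - t ^ 2 * v ^ 2 - a * c * u ^ 3
      + (a + c) * u ^ 2 = 0 := by
  have hD : v * (u - 1) * (v - 1) ≠ 0 := by
    simp [hv0, sub_ne_zero.mpr hu1, sub_ne_zero.mpr hv1]
  rw [class13_cubic_eq, sub_eq_zero, mul_assoc u]
  exact sq_mul_eq_of_eq_div hD ht (by rw [hw]; ring)

/-- Elimination step for the class 1.3 fibration: on the double cover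
w² = u(u-1)v(v-1)(au+bv-1)(cu+dv-1) with elliptic parameter t = w/(v(u-1)(v-1)),
the point (u, v) satisfies the displayed plane cubic. -/
theorem class13_plane_cubic {k : Type*} [Field k]
    (hchar2 : ringChar k ≠ 2) (hchar3 : ringChar k ≠ 3)
    (a b c d t u v w : k)
    (hw : w ^ 2 = u * (u - 1) * v * (v - 1) * (a * u + b * v - 1) * (c * u + d * v - 1))
    (hv0 : v ≠ 0) (hu1 : u ≠ 1) (hv1 : v ≠ 1)
    (ht : t = w / (v * (u - 1) * (v - 1))) :
    t ^ 2 * v - u + (d + b - t ^ 2) * u * v + (t ^ 2 - b * d) * u * v ^ 2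
      - (b * c + a * d) * u ^ 2 * v - t ^ 2 * v ^ 2 - a * c * u ^ 3
      + (a + c) * u ^ 2 = 0 :=
  class13_plane_cubic_general a b c d t u v w hw hv0 hu1 hv1 ht
end
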